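/- For every atomic rule ρ ∈ {ρ⁺, ρ⁻}, every rule μ ∈ {π⁺, π⁻, 𝔣4, λ, J}, and all modal trees T, S: if T rewrites to S by one ρ-step followed by one μ-step, then T rewrites to S by one μ-step followed by finitely many (possibly zero) ρ-steps (steps by atomic rules). -/

import Mathlib

namespace TRC

/-- Strictly positive formulas of `L⁺`. -/
inductive SPF : Type where
  | top : SPF
  | var : ℕ → SPF
  | dia : ℕ → SPF → SPF
  | and : SPF → SPF → SPF

/-- The sequent system `K⁺`. -/
inductive KPlus : SPF → SPF → Prop where
  | id (φ) : KPlus φ φ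
  | topI (φ) : KPlus φ .top
  | cut {φ ψ χ} : KPlus φ ψ → KPlus ψ χ → KPlus φ χ
  | andE₁ (φ ψ) : KPlus (.and φ ψ) φ
  | andE₂ (φ ψ) : KPlus (.and φ ψ) ψ
  | andI {φ ψ χ} : KPlus φ ψ → KPlus φ χ → KPlus φ (.and ψ χ)
  | dist {φ ψ} (α) : KPlus φ ψ → KPlus (.dia α φ) (.dia α ψ)

/-- The Reflection Calculus `RC`. -/
inductive RC : SPF → SPF → Prop where
  | id (φ) : RC φ φ
  | topI (φ) : RC φ .top
  | cut {φ ψ χ} : RC φ ψ → RC ψ χ → RC φ χ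
  | andE₁ (φ ψ) : RC (.and φ ψ) φ
  | andE₂ (φ ψ) : RC (.and φ ψ) ψ
  | andI {φ ψ χ} : RC φ ψ → RC φ χ → RC φ (.and ψ χ)
  | dist {φ ψ} (α) : RC φ ψ → RC (.dia α φ) (.dia α ψ)
  | trans (α φ) : RC (.dia α (.dia α φ)) (.dia α φ)
  | mono {α β} (φ) : β < α → RC (.dia α φ) (.dia β φ)
  | jax {α β} (φ ψ) : β < α → RC (.and (.dia α φ) (.dia β ψ)) (.dia α (.and φ (.dia β ψ)))

/-- Modal depth. -/
def SPF.md : SPF → ℕ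
  | .top => 0
  | .var _ => 0
  | .dia _ φ => φ.md + 1
  | .and φ ψ => max φ.md ψ.md

/-- Modal trees. -/
inductive MTree : Type where
  | node : List ℕ → List (ℕ × MTree) → MTree

/-- Sum of modal trees. -/
def MTree.sum : MTree → MTree → MTree
  | .node Δ₁ Γ₁, .node Δ₂ Γ₂ => .node (Δ₁ ++ Δ₂) (Γ₁ ++ Γ₂)

mutual
/-- Height of a modal tree. -/
def MTree.height : MTree → ℕ
  | .node _ Γ => heightL Γ
def heightL : List (ℕ × MTree) → ℕ
  | [] => 0
  | (_, S) :: Γ => max (S.height + 1) (heightL Γ)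
end

mutual
/-- `T.IsPos k`: the (1-indexed) string `k` is a position of `T`. -/
def MTree.IsPos : MTree → List ℕ → Prop
  | _, [] => True
  | .node _ Γ, i :: k => isPosL Γ i k
def isPosL : List (ℕ × MTree) → ℕ → List ℕ → Prop
  | [], _, _ => False
  | _ :: _, 0, _ => False
  | (_, S) :: _, 1, k => S.IsPos k
  | _ :: Γ, n+2, k => isPosL Γ (n+1) k
end

mutual
/-- Subtree of `T` at position `k` (returning a default junk value off positions). -/
def MTree.subtree : MTree → List ℕ → MTree
  | T, [] => T
  | .node Δ Γ, i :: k => subtreeL (.node Δ Γ) Γ i k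
def subtreeL : MTree → List (ℕ × MTree) → ℕ → List ℕ → MTree
  | d, [], _, _ => d
  | d, _ :: _, 0, _ => d
  | _, (_, S) :: _, 1, k => S.subtree k
  | d, _ :: Γ, n+2, k => subtreeL d Γ (n+1) k
end

mutual
/-- `T.replace S k`: replace the subtree of `T` at position `k` by `S`. -/
def MTree.replace : MTree → MTree → List ℕ → MTree
  | _, S, [] => S
  | .node Δ Γ, S, i :: k => .node Δ (replaceL Γ S i k)
def replaceL : List (ℕ × MTree) → MTree → ℕ → List ℕ → List (ℕ × MTree)
  | [], _, _, _ => []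
  | Γ, _, 0, _ => Γ
  | (α, C) :: Γ, S, 1, k => (α, C.replace S k) :: Γ
  | x :: Γ, S, n+2, k => x :: replaceL Γ S (n+1) k
end

/-- Names of the eight rewriting rules of TRC. -/
inductive Rule : Type where
  | rhoP | rhoM | sigma | piP | piM | four | lam | jay
  deriving DecidableEq

/-- One rewriting step performed at the root. -/
inductive RootStep : Rule → MTree → MTree → Prop where
  | rhoP {Δ Γ i p} (hi : 1 ≤ i) (h : Δ[i-1]? = some p) :
      RootStep .rhoP (.node Δ Γ) (.node (p :: Δ) Γ)
  | rhoM {Δ Γ i} (hi : 1 ≤ i) (h : i - 1 < Δ.length) :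
      RootStep .rhoM (.node Δ Γ) (.node (Δ.eraseIdx (i-1)) Γ)
  | sigma {Δ Γ i j x y} (hi : 1 ≤ i) (hj : 1 ≤ j) (hij : i ≠ j)
      (hx : Γ[i-1]? = some x) (hy : Γ[j-1]? = some y) :
      RootStep .sigma (.node Δ Γ) (.node Δ ((Γ.set (j-1) x).set (i-1) y))
  | piP {Δ Γ i x} (hi : 1 ≤ i) (hx : Γ[i-1]? = some x) :
      RootStep .piP (.node Δ Γ) (.node Δ (x :: Γ))
  | piM {Δ Γ i} (hi : 1 ≤ i) (h : i - 1 < Γ.length) :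
      RootStep .piM (.node Δ Γ) (.node Δ (Γ.eraseIdx (i-1)))
  | four {Δ Γ i j β Δt Γt S} (hi : 1 ≤ i) (hj : 1 ≤ j)
      (hΓ : Γ[i-1]? = some (β, MTree.node Δt Γt)) (hΓt : Γt[j-1]? = some (β, S)) :
      RootStep .four (.node Δ Γ) (.node Δ (Γ.set (i-1) (β, S)))
  | lam {Δ Γ i α β S} (hi : 1 ≤ i) (hβ : β < α) (hΓ : Γ[i-1]? = some (α, S)) :
      RootStep .lam (.node Δ Γ) (.node Δ (Γ.set (i-1) (β, S)))
  | jay {Δ Γ i j α β Δt Γt S} (hi : 1 ≤ i) (hj : 1 ≤ j) (hij : i ≠ j) (hβ : β < α)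
      (hΓi : Γ[i-1]? = some (α, MTree.node Δt Γt)) (hΓj : Γ[j-1]? = some (β, S)) :
      RootStep .jay (.node Δ Γ)
        (.node Δ ((Γ.set (i-1) (α, MTree.node Δt (Γt ++ [(β, S)]))).eraseIdx (j-1)))

/-- One step of the rule `r`, applied at some position. -/
def StepR (r : Rule) (T T' : MTree) : Prop :=
  ∃ k S, T.IsPos k ∧ RootStep r (T.subtree k) S ∧ T' = T.replace S k

/-- One step of the rewriting relation `↪`. -/
def Step (T T' : MTree) : Prop := ∃ r, StepR r T T'

/-- The rewriting relation `↪*`. -/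
def Steps : MTree → MTree → Prop := Relation.ReflTransGen Step

/-- TRC-equivalence `↔*`. -/
def TEquiv (T T' : MTree) : Prop := Steps T T' ∧ Steps T' T

/-- `T ↪^Ω S` : rewriting applying the rules of `Ω` in order, one step each. -/
inductive StepsOf : List Rule → MTree → MTree → Prop where
  | nil (T) : StepsOf [] T T
  | cons {r Ω T U S} : StepR r T U → StepsOf Ω U S → StepsOf (r :: Ω) T S

def AtomicStep (T S : MTree) : Prop := StepR .rhoP T S ∨ StepR .rhoM T S
def DecreasingStep (T S : MTree) : Prop := StepR .piM T S ∨ StepR .four T S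
def ModalStep (T S : MTree) : Prop := StepR .lam T S ∨ StepR .jay T S

/-- Finite conjunctions (empty conjunction is `⊤`). -/
def bigAnd : List SPF → SPF
  | [] => .top
  | φ :: l => .and φ (bigAnd l)

mutual
/-- The embedding `ℱ` of modal trees into formulas. -/
def MTree.toFormula : MTree → SPF
  | .node Δ Γ => .and (bigAnd (Δ.map SPF.var)) (diamL Γ)
def diamL : List (ℕ × MTree) → SPF
  | [] => .top
  | (α, S) :: Γ => .and (.dia α S.toFormula) (diamL Γ)
end

/-- The embedding `𝒯` of formulas into modal trees. -/
def SPF.toTree : SPF → MTree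
  | .top => .node [] []
  | .var p => .node [p] []
  | .dia α φ => .node [] [(α, φ.toTree)]
  | .and φ ψ => φ.toTree.sum ψ.toTree

/-- Nonempty conjunction `φ₁ ∧ (φ₂ ∧ (… ∧ φₙ))`. -/
def conjNE : SPF → List SPF → SPF
  | φ, [] => φ
  | φ, ψ :: l => .and φ (conjNE ψ l)

end TRC

/-!
An atomic step only changes the atom list of one node, replacing it by a list whose members
already occur there. Say `T` thins to `U` (`AtomSub T U`) when both trees have the same shape and
at each node the atoms of `U` occur among those of `T`. Every rule except `ρ⁻` is insensitive to
thinning: a step from `U` can be mirrored from `T` at the same position, and the results are again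
related by thinning (`ρ⁻` is not, as `U` may carry more copies of an atom than `T`). Finally every
thinning is a sequence of atomic steps: at each node, copy the wanted atoms to the front with `ρ⁺`,
then erase the old list with `ρ⁻`.
-/

namespace TRC

mutual
inductive AtomSub : MTree → MTree → Prop where
  | node {Δ Δ' : List ℕ} {Γ Γ' : List (ℕ × MTree)} :
      Δ' ⊆ Δ → AtomSubL Γ Γ' → AtomSub (.node Δ Γ) (.node Δ' Γ')
inductive AtomSubL : List (ℕ × MTree) → List (ℕ × MTree) → Prop where
  | nil : AtomSubL [] []
  | cons {α : ℕ} {S S' : MTree} {Γ Γ' : List (ℕ × MTree)} :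
      AtomSub S S' → AtomSubL Γ Γ' → AtomSubL ((α, S) :: Γ) ((α, S') :: Γ')
end

mutual
theorem AtomSub.refl : ∀ T, AtomSub T T
  | .node _ Γ => .node (List.Subset.refl _) (AtomSubL.refl Γ)
theorem AtomSubL.refl : ∀ Γ, AtomSubL Γ Γ
  | [] => .nil
  | (_, S) :: Γ => .cons (AtomSub.refl S) (AtomSubL.refl Γ)
end

namespace AtomSubL

theorem length_eq : ∀ {Γ Γ'}, AtomSubL Γ Γ' → Γ.length = Γ'.length
  | _, _, .nil => rfl
  | _, _, .cons _ h => congrArg (· + 1) h.length_eq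

theorem exists_getElem? : ∀ {Γ Γ'}, AtomSubL Γ Γ' → ∀ {n : ℕ} {α S'}, Γ'[n]? = some (α, S') →
    ∃ S, Γ[n]? = some (α, S) ∧ AtomSub S S'
  | _, _, .nil, _, _, _, h => by simp at h
  | _, _, .cons hS _, 0, _, _, h => by
    obtain ⟨rfl, rfl⟩ := by simpa using h
    exact ⟨_, rfl, hS⟩
  | _, _, .cons _ h, n + 1, _, _, hn => h.exists_getElem? hn

theorem set : ∀ {Γ Γ'}, AtomSubL Γ Γ' → ∀ (n : ℕ) {α S S'}, AtomSub S S' →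
    AtomSubL (Γ.set n (α, S)) (Γ'.set n (α, S'))
  | _, _, .nil, _, _, _, _, _ => .nil
  | _, _, .cons _ h, 0, _, _, _, hS => .cons hS h
  | _, _, .cons hS₀ h, n + 1, _, _, _, hS => .cons hS₀ (h.set n hS)

theorem eraseIdx : ∀ {Γ Γ'}, AtomSubL Γ Γ' → ∀ n, AtomSubL (Γ.eraseIdx n) (Γ'.eraseIdx n)
  | _, _, .nil, _ => .nil
  | _, _, .cons _ h, 0 => h
  | _, _, .cons hS h, n + 1 => .cons hS (h.eraseIdx n)

theorem append : ∀ {Γ₁ Γ₁' Γ₂ Γ₂'}, AtomSubL Γ₁ Γ₁' → AtomSubL Γ₂ Γ₂' →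
    AtomSubL (Γ₁ ++ Γ₂) (Γ₁' ++ Γ₂')
  | _, _, _, _, .nil, h₂ => h₂
  | _, _, _, _, .cons hS h₁, h₂ => .cons hS (h₁.append h₂)

end AtomSubL

mutual
theorem AtomSub.isPos : ∀ {T U} (k), AtomSub T U → U.IsPos k → T.IsPos k
  | .node _ _, _, [], _, _ => trivial
  | _, _, i :: k, .node _ h, hk => h.isPosL i k hk
theorem AtomSubL.isPosL : ∀ {Γ Γ'} (i k), AtomSubL Γ Γ' → isPosL Γ' i k → isPosL Γ i k
  | _, _, _, _, .nil, hk => hk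
  | _, _, 0, _, .cons _ _, hk => hk
  | _, _, 1, k, .cons hS _, hk => hS.isPos k hk
  | _, _, n + 2, k, .cons _ h, hk => h.isPosL (n + 1) k hk
end

mutual
theorem AtomSub.subtree : ∀ {T U} (k), AtomSub T U → AtomSub (T.subtree k) (U.subtree k)
  | .node _ _, .node _ _, [], h => h
  | _, _, i :: k, h@(.node _ hΓ) => hΓ.subtreeL h i k
theorem AtomSubL.subtreeL : ∀ {Γ Γ' d d'}, AtomSubL Γ Γ' → AtomSub d d' → ∀ i k,
    AtomSub (subtreeL d Γ i k) (subtreeL d' Γ' i k)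
  | _, _, _, _, .nil, hd, _, _ => hd
  | _, _, _, _, .cons _ _, hd, 0, _ => hd
  | _, _, _, _, .cons hS _, _, 1, k => hS.subtree k
  | _, _, _, _, .cons _ h, hd, n + 2, k => h.subtreeL hd (n + 1) k
end

mutual
theorem AtomSub.replace : ∀ {T U A B} (k), AtomSub T U → AtomSub A B →
    AtomSub (T.replace A k) (U.replace B k)
  | .node _ _, .node _ _, _, _, [], _, hAB => hAB
  | _, _, _, _, i :: k, .node hΔ hΓ, hAB => .node hΔ (hΓ.replaceL hAB i k)
theorem AtomSubL.replaceL : ∀ {Γ Γ' A B}, AtomSubL Γ Γ' → AtomSub A B → ∀ i k,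
    AtomSubL (replaceL Γ A i k) (replaceL Γ' B i k)
  | _, _, _, _, .nil, _, _, _ => .nil
  | _, _, _, _, .cons hS h, _, 0, _ => .cons hS h
  | _, _, _, _, .cons hS h, hAB, 1, k => .cons (hS.replace k hAB) h
  | _, _, _, _, .cons hS h, hAB, n + 2, k => .cons hS (h.replaceL hAB (n + 1) k)
end

mutual
theorem MTree.replace_subtree_self : ∀ (T : MTree) (k), T.IsPos k → T.replace (T.subtree k) k = T
  | .node _ _, [], _ => rfl
  | .node Δ Γ, i :: k, hk => congrArg (MTree.node Δ) (replaceL_subtreeL_self (.node Δ Γ) Γ i k hk)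
theorem replaceL_subtreeL_self : ∀ (d : MTree) (Γ : List (ℕ × MTree)) i k, isPosL Γ i k →
    replaceL Γ (subtreeL d Γ i k) i k = Γ
  | _, (_, S) :: _, 1, k, hk => congrArg (fun C => (_, C) :: _) (S.replace_subtree_self k hk)
  | d, _ :: Γ, n + 2, k, hk => congrArg (_ :: ·) (replaceL_subtreeL_self d Γ (n + 1) k hk)
end

theorem RootStep.atomSub {r : Rule} (hr : r = .rhoP ∨ r = .rhoM) {T U : MTree}
    (h : RootStep r T U) : AtomSub T U := by
  cases h <;> simp only [reduceCtorEq, or_self] at hr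
  case rhoP hp => exact .node (List.cons_subset.2 ⟨List.mem_of_getElem? hp, .refl _⟩) (.refl _)
  case rhoM => exact .node (List.eraseIdx_subset) (.refl _)

theorem StepR.atomSub {r : Rule} (hr : r = .rhoP ∨ r = .rhoM) {T U : MTree}
    (h : StepR r T U) : AtomSub T U := by
  obtain ⟨k, A, hk, hA, rfl⟩ := h
  simpa only [T.replace_subtree_self k hk] using (AtomSub.refl T).replace k (hA.atomSub hr)

theorem AtomSub.exists_rootStep {μ : Rule} (hμ : μ ≠ .rhoM) {T U B : MTree} (hTU : AtomSub T U)
    (h : RootStep μ U B) : ∃ A, RootStep μ T A ∧ AtomSub A B := by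
  obtain ⟨hΔ, hΓ⟩ := hTU
  cases h with
  | rhoP hi hp =>
    obtain ⟨n, hn⟩ := List.mem_iff_getElem?.1 (hΔ (List.mem_of_getElem? hp))
    exact ⟨_, .rhoP (i := n + 1) (by omega) (by simpa using hn),
      .node (List.cons_subset_cons _ hΔ) hΓ⟩
  | rhoM => exact absurd rfl hμ
  | sigma hi hj hij hx hy =>
    obtain ⟨_, hx₀, hX⟩ := hΓ.exists_getElem? hx
    obtain ⟨_, hy₀, hY⟩ := hΓ.exists_getElem? hy
    exact ⟨_, .sigma hi hj hij hx₀ hy₀, .node hΔ ((hΓ.set _ hX).set _ hY)⟩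
  | piP hi hx =>
    obtain ⟨_, hx₀, hX⟩ := hΓ.exists_getElem? hx
    exact ⟨_, .piP hi hx₀, .node hΔ (.cons hX hΓ)⟩
  | piM hi hlt => exact ⟨_, .piM hi (hΓ.length_eq ▸ hlt), .node hΔ (hΓ.eraseIdx _)⟩
  | four hi hj hΓi hΓt =>
    obtain ⟨_, hXi, hΔt, hΓt'⟩ := hΓ.exists_getElem? hΓi
    obtain ⟨_, hS₀, hS⟩ := hΓt'.exists_getElem? hΓt
    exact ⟨_, .four hi hj hXi hS₀, .node hΔ (hΓ.set _ hS)⟩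
  | lam hi hβ hΓi =>
    obtain ⟨_, hS₀, hS⟩ := hΓ.exists_getElem? hΓi
    exact ⟨_, .lam hi hβ hS₀, .node hΔ (hΓ.set _ hS)⟩
  | jay hi hj hij hβ hΓi hΓj =>
    obtain ⟨_, hXi, hΔt, hΓt'⟩ := hΓ.exists_getElem? hΓi
    obtain ⟨_, hS₀, hS⟩ := hΓ.exists_getElem? hΓj
    exact ⟨_, .jay hi hj hij hβ hXi hS₀,
      .node hΔ ((hΓ.set _ (.node hΔt (hΓt'.append (.cons hS .nil)))).eraseIdx _)⟩

theorem AtomSub.exists_stepR {μ : Rule} (hμ : μ ≠ .rhoM) {T U S : MTree} (hTU : AtomSub T U)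
    (h : StepR μ U S) : ∃ S', StepR μ T S' ∧ AtomSub S' S := by
  obtain ⟨k, B, hk, hB, rfl⟩ := h
  obtain ⟨C, hC, hCB⟩ := (hTU.subtree k).exists_rootStep hμ hB
  exact ⟨T.replace C k, ⟨k, C, hTU.isPos k hk, hC, rfl⟩, hTU.replace k hCB⟩

theorem StepR.of_rootStep {r : Rule} {T U : MTree} (h : RootStep r T U) : StepR r T U := by
  cases T
  exact ⟨[], U, trivial, h, rfl⟩

theorem isPosL_append_cons (P : List (ℕ × MTree)) (α : ℕ) (S : MTree) (Γ) (k) :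
    isPosL (P ++ (α, S) :: Γ) (P.length + 1) k ↔ S.IsPos k := by
  induction P with
  | nil => simp [isPosL]
  | cons x P ih => simpa [isPosL] using ih

theorem subtreeL_append_cons (d : MTree) (P : List (ℕ × MTree)) (α : ℕ) (S : MTree) (Γ) (k) :
    subtreeL d (P ++ (α, S) :: Γ) (P.length + 1) k = S.subtree k := by
  induction P with
  | nil => simp [subtreeL]
  | cons x P ih => simpa [subtreeL] using ih

theorem replaceL_append_cons (P : List (ℕ × MTree)) (α : ℕ) (S A : MTree) (Γ) (k) :
    replaceL (P ++ (α, S) :: Γ) A (P.length + 1) k = P ++ (α, S.replace A k) :: Γ := by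
  induction P with
  | nil => simp [replaceL]
  | cons x P ih => simpa [replaceL] using ih

theorem StepR.node_append_cons {r : Rule} {S S' : MTree} (h : StepR r S S') (Δ P α Γ) :
    StepR r (.node Δ (P ++ (α, S) :: Γ)) (.node Δ (P ++ (α, S') :: Γ)) := by
  obtain ⟨k, A, hk, hA, rfl⟩ := h
  refine ⟨(P.length + 1) :: k, A, ?_, ?_, ?_⟩
  · simpa [MTree.IsPos, isPosL_append_cons] using hk
  · simpa [MTree.subtree, subtreeL_append_cons] using hA
  · simp [MTree.replace, replaceL_append_cons]

theorem AtomicStep.node_append_cons {S S' : MTree} (h : AtomicStep S S') (Δ P α Γ) :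
    AtomicStep (.node Δ (P ++ (α, S) :: Γ)) (.node Δ (P ++ (α, S') :: Γ)) :=
  h.imp (·.node_append_cons Δ P α Γ) (·.node_append_cons Δ P α Γ)

theorem atomicStep_node_cons_atom {Δ : List ℕ} {p : ℕ} (hp : p ∈ Δ) (Γ) :
    AtomicStep (.node Δ Γ) (.node (p :: Δ) Γ) := by
  obtain ⟨n, hn⟩ := List.mem_iff_getElem?.1 hp
  exact .inl (.of_rootStep (.rhoP (i := n + 1) (by omega) (by simpa using hn)))

theorem atomicStep_node_erase_atom (Δ : List ℕ) (p : ℕ) (M Γ) :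
    AtomicStep (.node (Δ ++ p :: M) Γ) (.node (Δ ++ M) Γ) := by
  refine .inr (.of_rootStep ?_)
  simpa [List.eraseIdx_append_of_length_le] using
    RootStep.rhoM (Δ := Δ ++ p :: M) (Γ := Γ) (i := Δ.length + 1) (by omega) (by simp)

theorem atomicSteps_node_of_subset {Δ Δ' : List ℕ} (h : Δ' ⊆ Δ) (Γ) :
    Relation.ReflTransGen AtomicStep (.node Δ Γ) (.node Δ' Γ) := by
  have push : ∀ L ⊆ Δ, Relation.ReflTransGen AtomicStep (.node Δ Γ) (.node (L ++ Δ) Γ) := by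
    intro L hL
    induction L with
    | nil => exact .refl
    | cons p L ih =>
      have hL' := List.cons_subset.1 hL
      exact (ih hL'.2).tail (atomicStep_node_cons_atom (List.mem_append_right L hL'.1) Γ)
  have drop : ∀ M, Relation.ReflTransGen AtomicStep (.node (Δ' ++ M) Γ) (.node Δ' Γ) := by
    intro M
    induction M with
    | nil => simpa using .refl
    | cons p M ih => exact .head (atomicStep_node_erase_atom Δ' p M Γ) ih
  exact (push Δ' h).trans (drop Δ)

mutual
theorem AtomSub.atomicSteps : ∀ {T U}, AtomSub T U → Relation.ReflTransGen AtomicStep T U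
  | _, _, .node hΔ hΓ => (atomicSteps_node_of_subset hΔ _).trans (hΓ.atomicSteps _ [])
theorem AtomSubL.atomicSteps : ∀ {Γ Γ'}, AtomSubL Γ Γ' → ∀ Δ P,
    Relation.ReflTransGen AtomicStep (.node Δ (P ++ Γ)) (.node Δ (P ++ Γ'))
  | _, _, .nil, _, _ => .refl
  | _, _, .cons (α := α) (S' := S') hS h, Δ, P =>
    .trans (Relation.ReflTransGen.lift (fun X => MTree.node Δ (P ++ (α, X) :: _))
        (fun _ _ hstep => hstep.node_append_cons Δ P α _) _ _ hS.atomicSteps)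
      (by simpa using h.atomicSteps Δ (P ++ [(α, S')]))
end

end TRC

/-- an atomic step followed by a `μ`-step
(`μ ∈ {π⁺, π⁻, 𝔣4, λ, J}`) can be replaced by a `μ`-step followed by
finitely many atomic steps. -/
theorem atomic_permutation (ρ μ : TRC.Rule)
    (hρ : ρ = TRC.Rule.rhoP ∨ ρ = TRC.Rule.rhoM)
    (hμ : μ = TRC.Rule.piP ∨ μ = TRC.Rule.piM ∨ μ = TRC.Rule.four ∨
      μ = TRC.Rule.lam ∨ μ = TRC.Rule.jay)
    (T S : TRC.MTree) (h : ∃ U, TRC.StepR ρ T U ∧ TRC.StepR μ U S) :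
    ∃ U, TRC.StepR μ T U ∧ Relation.ReflTransGen TRC.AtomicStep U S := by
  obtain ⟨U, hTU, hUS⟩ := h
  have hμM : μ ≠ .rhoM := by rcases hμ with rfl | rfl | rfl | rfl | rfl <;> decide
  obtain ⟨S', hTS', hS'S⟩ := (hTU.atomSub hρ).exists_stepR hμM hUS
  exact ⟨S', hTS', hS'S.atomicSteps⟩
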